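/- arXiv:1403.4776 — 5 statements merged into one kernel-verified Lean document; each statement's English description precedes it below -/
import Mathlib

section
/- Let r ≥ 2 be an integer, let V, H : ℕ → ℕ satisfy V(0) = 1, H(0) = 1, and for all n ≥ 1, V(n) = 4(r−1)·V(n−1) + 2·H(n−1) and H(n) = 2·V(n−1), and set R(n) = V(n) + H(n). Let d = (r−1)² + 1 (as a real number), and let λ₊ = 2(r−1) + 2√d and λ₋ = 2(r−1) − 2√d. Then for every n ≥ 0, the real number R(n) equals (1 + 1/√d)·λ₊ⁿ + (1 − 1/√d)·λ₋ⁿ. -/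
/-! Summing the two coupled recurrences gives the scalar recurrence
`R (n + 2) = 4 (r - 1) R (n + 1) + 4 R n`, whose characteristic roots are `λ₊` and `λ₋`
since `√d ^ 2 = (r - 1) ^ 2 + 1`; the coefficients `1 ± 1 / √d` are fixed by `R 0 = 2` and
`R 1 = 4 r`. -/

theorem coupled_sum_two_step {S : Type*} [CommSemiring S] {V H : ℕ → S} (a b : S)
    (hV : ∀ n, V (n + 1) = a * V n + b * H n) (hH : ∀ n, H (n + 1) = b * V n) (n : ℕ) :
    V (n + 2) + H (n + 2) = a * (V (n + 1) + H (n + 1)) + b ^ 2 * (V n + H n) := by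
  rw [hV (n + 1), hH (n + 1), hV n, hH n]
  ring

theorem eq_mul_pow_add_mul_pow_of_two_step {K : Type*} [CommRing K] {u : ℕ → K}
    {a b x y α β : K} (hu : ∀ n, u (n + 2) = a * u (n + 1) + b * u n)
    (hx : x ^ 2 = a * x + b) (hy : y ^ 2 = a * y + b)
    (h0 : u 0 = α + β) (h1 : u 1 = α * x + β * y) (n : ℕ) :
    u n = α * x ^ n + β * y ^ n := by
  induction n using Nat.twoStepInduction with
  | zero => simpa using h0
  | one => simpa using h1
  | more n ih0 ih1 =>
    rw [hu, ih0, ih1]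
    linear_combination (-(α * x ^ n)) * hx - (β * y ^ n) * hy

theorem strip_R_closed_form (r : ℕ) (hr : 2 ≤ r) (V H R : ℕ → ℕ)
    (hV0 : V 0 = 1) (hH0 : H 0 = 1)
    (hV : ∀ n, 1 ≤ n → V n = 4 * (r - 1) * V (n - 1) + 2 * H (n - 1))
    (hH : ∀ n, 1 ≤ n → H n = 2 * V (n - 1))
    (hR : ∀ n, R n = V n + H n)
    (d : ℝ) (hd : d = ((r : ℝ) - 1) ^ 2 + 1)
    (lp lm : ℝ)
    (hlp : lp = 2 * ((r : ℝ) - 1) + 2 * Real.sqrt d)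
    (hlm : lm = 2 * ((r : ℝ) - 1) - 2 * Real.sqrt d) :
    ∀ n : ℕ,
      (R n : ℝ) =
        (1 + 1 / Real.sqrt d) * lp ^ n + (1 - 1 / Real.sqrt d) * lm ^ n := by
  have hd0 : 0 < d := by rw [hd]; positivity
  have hs : Real.sqrt d ^ 2 = ((r : ℝ) - 1) ^ 2 + 1 := by rw [Real.sq_sqrt hd0.le, hd]
  have hs0 : Real.sqrt d ≠ 0 := (Real.sqrt_pos.mpr hd0).ne'
  have hcast : ((r - 1 : ℕ) : ℝ) = r - 1 := by push_cast [Nat.cast_sub (by omega : 1 ≤ r)]; ring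
  have hV' (n : ℕ) : (V (n + 1) : ℝ) = 4 * ((r : ℝ) - 1) * V n + 2 * H n := by
    rw [hV (n + 1) n.succ_pos]; push_cast [hcast]; rfl
  have hH' (n : ℕ) : (H (n + 1) : ℝ) = 2 * V n := by
    rw [hH (n + 1) n.succ_pos]; push_cast; rfl
  have hrec (n : ℕ) : (R (n + 2) : ℝ) = 4 * ((r : ℝ) - 1) * R (n + 1) + 2 ^ 2 * R n := by
    push_cast [hR]
    exact coupled_sum_two_step (V := fun n => (V n : ℝ)) (H := fun n => (H n : ℝ)) _ _ hV' hH' n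
  have hlp2 : lp ^ 2 = 4 * ((r : ℝ) - 1) * lp + 2 ^ 2 := by rw [hlp]; linear_combination 4 * hs
  have hlm2 : lm ^ 2 = 4 * ((r : ℝ) - 1) * lm + 2 ^ 2 := by rw [hlm]; linear_combination 4 * hs
  have hR0 : (R 0 : ℝ) = (1 + 1 / Real.sqrt d) + (1 - 1 / Real.sqrt d) := by
    push_cast [hR, hV0, hH0]; ring
  have hR1 : (R 1 : ℝ) = (1 + 1 / Real.sqrt d) * lp + (1 - 1 / Real.sqrt d) * lm := by
    push_cast [hR, hV' 0, hH' 0, hV0, hH0, hlp, hlm]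
    field_simp
    ring
  exact eq_mul_pow_add_mul_pow_of_two_step (u := fun n => (R n : ℝ)) hrec hlp2 hlm2 hR0 hR1
end

section
/- Let r ≥ 2 be an integer, let V, H : ℕ → ℕ satisfy V(0) = 1, H(0) = 1, and for all n ≥ 1, V(n) = 4(r−1)·V(n−1) + 2·H(n−1) and H(n) = 2·V(n−1), and set R(n) = V(n) + H(n). Then the sequence of real numbers R(n+1)/R(n) converges, as n → ∞, to λ₊ = 2(r−1) + 2√((r−1)² + 1). -/
/-!
Eliminating `H` gives the second-order recurrence `R (n + 2) = 4 (r - 1) R (n + 1) + 4 R n`, whose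
characteristic roots are `λ± = 2 (r - 1) ± 2 √((r - 1)² + 1)`. Hence `R n = c λ₊ⁿ + d λ₋ⁿ`, where
`c > 0` because `λ₋ < 0 ≤ R 1` and `R 0 > 0`; since `|λ₋| < λ₊`, the ratio `R (n + 1) / R n`
tends to the dominant root `λ₊`.
-/

open Filter Topology

theorem sum_recurrence_of_coupled_recurrence {S : Type*} [CommSemiring S] {V H : ℕ → S} (k : S)
    (hV : ∀ n, V (n + 1) = k * V n + 2 * H n) (hH : ∀ n, H (n + 1) = 2 * V n) (n : ℕ) :
    V (n + 2) + H (n + 2) = k * (V (n + 1) + H (n + 1)) + 4 * (V n + H n) := by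
  rw [hV (n + 1), hH (n + 1), hH n, hV n]
  ring

theorem eq_add_pow_of_recurrence {K : Type*} [Field K] {x : ℕ → K} {α β : K} (hαβ : α ≠ β)
    (hx : ∀ n, x (n + 2) = (α + β) * x (n + 1) - α * β * x n) (n : ℕ) :
    x n = (x 1 - β * x 0) / (α - β) * α ^ n + (α * x 0 - x 1) / (α - β) * β ^ n := by
  have hsub : α - β ≠ 0 := sub_ne_zero.mpr hαβ
  induction n using Nat.twoStepInduction with
  | zero => field_simp; ring
  | one => field_simp; ring
  | more n ih₀ ih₁ => rw [hx, ih₀, ih₁]; ring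

theorem tendsto_div_of_eq_add_pow {K : Type*} [NormedField K] {x : ℕ → K} {α β c d : K}
    (hβα : ‖β‖ < ‖α‖) (hc : c ≠ 0) (hx : ∀ n, x n = c * α ^ n + d * β ^ n) :
    Tendsto (fun n => x (n + 1) / x n) atTop (𝓝 α) := by
  have hα : α ≠ 0 := norm_pos_iff.mp ((norm_nonneg β).trans_lt hβα)
  have hq : Tendsto (fun n => (β / α) ^ n) atTop (𝓝 0) :=
    tendsto_pow_atTop_nhds_zero_of_norm_lt_one (by rwa [norm_div, div_lt_one (by positivity)])
  have hlim : Tendsto (fun n => (c * α + d * β * (β / α) ^ n) / (c + d * (β / α) ^ n))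
      atTop (𝓝 α) := by
    have := ((hq.const_mul (d * β)).const_add (c * α)).div ((hq.const_mul d).const_add c)
      (by simpa using hc)
    rwa [mul_zero, add_zero, mul_zero, add_zero, mul_div_cancel_left₀ α hc] at this
  refine hlim.congr fun n => ?_
  have hαn : α ^ n ≠ 0 := pow_ne_zero n hα
  rw [hx, hx, ← mul_div_mul_right _ _ hαn]
  congr 1 <;> (rw [div_pow]; field_simp)
  ring

theorem strip_R_ratio_limit (r : ℕ) (hr : 2 ≤ r) (V H R : ℕ → ℕ)
    (hV0 : V 0 = 1) (hH0 : H 0 = 1)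
    (hV : ∀ n, 1 ≤ n → V n = 4 * (r - 1) * V (n - 1) + 2 * H (n - 1))
    (hH : ∀ n, 1 ≤ n → H n = 2 * V (n - 1))
    (hR : ∀ n, R n = V n + H n) :
    Filter.Tendsto (fun n : ℕ => (R (n + 1) : ℝ) / (R n : ℝ)) Filter.atTop
      (nhds (2 * ((r : ℝ) - 1) + 2 * Real.sqrt (((r : ℝ) - 1) ^ 2 + 1))) := by
  set a : ℝ := (r : ℝ) - 1
  set s : ℝ := Real.sqrt (a ^ 2 + 1)
  have ha : 1 ≤ a := by
    have : (2 : ℝ) ≤ r := by exact_mod_cast hr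
    linarith
  have hs : s ^ 2 = a ^ 2 + 1 := Real.sq_sqrt (by positivity)
  have has : a < s := by nlinarith [Real.sqrt_nonneg (a ^ 2 + 1)]
  set α : ℝ := 2 * a + 2 * s
  set β : ℝ := 2 * a - 2 * s
  have hβα : β < α := by linarith
  have hrec : ∀ n, (R (n + 2) : ℝ) = (α + β) * R (n + 1) - α * β * R n := by
    intro n
    have hnat := sum_recurrence_of_coupled_recurrence (4 * (r - 1))
      (fun n => by simpa using hV (n + 1) (by omega))
      (fun n => by simpa using hH (n + 1) (by omega)) n
    rw [← hR, ← hR, ← hR] at hnat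
    have hcast := congrArg (fun m : ℕ => (m : ℝ)) hnat
    push_cast [Nat.cast_sub (by omega : 1 ≤ r)] at hcast
    linear_combination hcast - 4 * R n * hs
  have hc : 0 < ((R 1 : ℝ) - β * R 0) / (α - β) := by
    have hR0 : (R 0 : ℝ) = 2 := by rw [hR, hV0, hH0]; norm_num
    have hR1 : (0 : ℝ) ≤ R 1 := Nat.cast_nonneg _
    apply div_pos <;> nlinarith
  refine tendsto_div_of_eq_add_pow ?_ hc.ne'
    (eq_add_pow_of_recurrence (x := fun n => (R n : ℝ)) hβα.ne' hrec)
  rw [Real.norm_eq_abs, Real.norm_eq_abs, abs_of_neg (by linarith), abs_of_pos (by linarith)]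
  linarith
end

section
/- For every positive integer n, every tatami covering of the n×n grid contains at most n monominoes. -/
/-- A monomino block: a single cell `(i, j)`. -/
def IsMonomino (b : Finset (ℕ × ℕ)) : Prop := ∃ i j : ℕ, b = {(i, j)}

/-- A horizontal domino block: cells `(i, j)` and `(i, j+1)`. -/
def IsHDomino (b : Finset (ℕ × ℕ)) : Prop := ∃ i j : ℕ, b = {(i, j), (i, j + 1)}

/-- A vertical domino block: cells `(i, j)` and `(i+1, j)`. -/
def IsVDomino (b : Finset (ℕ × ℕ)) : Prop := ∃ i j : ℕ, b = {(i, j), (i + 1, j)}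

/-- `IsTatami m n T` : `T` is a tatami covering of the `m × n` grid, i.e. a
partition of `{0,…,m−1} × {0,…,n−1}` into monominoes, horizontal dominoes and
vertical dominoes such that no four blocks meet at a point. -/
def IsTatami (m n : ℕ) (T : Finset (Finset (ℕ × ℕ))) : Prop :=
  (∀ b ∈ T, IsMonomino b ∨ IsHDomino b ∨ IsVDomino b) ∧
  (∀ b ∈ T, ∀ c ∈ T, b ≠ c → Disjoint b c) ∧
  (∀ p : ℕ × ℕ, (p.1 < m ∧ p.2 < n) ↔ ∃ b ∈ T, p ∈ b) ∧
  (∀ i j : ℕ, ∀ b₁ ∈ T, ∀ b₂ ∈ T, ∀ b₃ ∈ T, ∀ b₄ ∈ T,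
    (i, j) ∈ b₁ → (i + 1, j) ∈ b₂ → (i, j + 1) ∈ b₃ → (i + 1, j + 1) ∈ b₄ →
    ¬(b₁ ≠ b₂ ∧ b₁ ≠ b₃ ∧ b₁ ≠ b₄ ∧ b₂ ≠ b₃ ∧ b₂ ≠ b₄ ∧ b₃ ≠ b₄))

open Classical in
/-- The number of monominoes of a covering. -/
noncomputable def monoCount (T : Finset (Finset (ℕ × ℕ))) : ℕ :=
  (T.filter IsMonomino).card

open Classical in
/-- The number of vertical dominoes of a covering. -/
noncomputable def vCount (T : Finset (Finset (ℕ × ℕ))) : ℕ :=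
  (T.filter IsVDomino).card

open Classical in
/-- The number of horizontal dominoes of a covering. -/
noncomputable def hCount (T : Finset (Finset (ℕ × ℕ))) : ℕ :=
  (T.filter IsHDomino).card

/-- `sd n k` : the subsets of `{1, 2, …, n}` whose elements sum to `k`. -/
def sd (n k : ℕ) : Finset (Finset ℕ) :=
  (Finset.Icc 1 n).powerset.filter (fun s => s.sum id = k)

/-!
Encode a covering by the symmetric relation pairing the two cells of each domino. If the tile of a
cell `c` avoids the two neighbours of `c` towards a diagonal direction `(a, b)`, the no-four-corners
rule forces the cell `c + (a, b)` to be the far end of a domino coming from `c`'s side, so its tile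
avoids the same two neighbours: `c` sends a ray of dominoes along the diagonal up to the border.
A monomino sends rays in all four directions, so it never lies on a ray of another monomino.

Two distinct monominoes with the same value of `|i - j|` are either on a common diagonal, so one of
them is on a ray of the other, or on diagonals mirrored in the main diagonal. In the second case their
rays span a tilted rectangle whose two other corners are crossings of rays; each crossing forces a
domino, and the far cells of these two dominoes are again two sources of rays facing each other,
spanning a strictly smaller, transposed rectangle. The descent ends in a contradiction, so
`(i, j) ↦ |i - j|` is injective on the monominoes, with values in `{0, …, n - 1}`.
-/

def InGrid (m n : ℕ) (c : ℤ × ℤ) : Prop :=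
  0 ≤ c.1 ∧ c.1 < m ∧ 0 ≤ c.2 ∧ c.2 < n

/-- `R c d` says that `c` and `d` are the two cells of a domino. Cells on a diagonal of a `2 × 2`
square never share a tile, so the square meets fewer than four tiles iff two adjacent cells of it
are paired: this is `square`. -/
structure IsTatamiPairing (m n : ℕ) (R : ℤ × ℤ → ℤ × ℤ → Prop) : Prop where
  symm : ∀ {c d}, R c d → R d c
  unique : ∀ {c d e}, R c d → R c e → d = e
  square : ∀ c : ℤ × ℤ, InGrid m n c → InGrid m n (c.1 + 1, c.2 + 1) →
    R c (c.1 + 1, c.2) ∨ R c (c.1, c.2 + 1) ∨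
      R (c.1 + 1, c.2 + 1) (c.1 + 1, c.2) ∨ R (c.1 + 1, c.2 + 1) (c.1, c.2 + 1)

def EmitsRay (R : ℤ × ℤ → ℤ × ℤ → Prop) (c : ℤ × ℤ) (a b : ℤˣ) : Prop :=
  ∀ d, R c d → d ≠ (c.1 + a, c.2) ∧ d ≠ (c.1, c.2 + b)

def PairedBack (R : ℤ × ℤ → ℤ × ℤ → Prop) (c : ℤ × ℤ) (a b : ℤˣ) : Prop :=
  R c (c.1 - a, c.2) ∨ R c (c.1, c.2 - b)

theorem InGrid.of_ray_succ {m n : ℕ} {c : ℤ × ℤ} {a b : ℤˣ} {k : ℕ} (hc : InGrid m n c)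
    (h : InGrid m n (c.1 + (k + 1 : ℕ) * a, c.2 + (k + 1 : ℕ) * b)) :
    InGrid m n (c.1 + k * a, c.2 + k * b) := by
  unfold InGrid at *
  rcases Int.units_eq_one_or a with rfl | rfl <;> rcases Int.units_eq_one_or b with rfl | rfl <;>
    simp only [Units.val_one, Units.val_neg, mul_one, mul_neg] at * <;> omega

theorem EmitsRay.not_pairedBack_neg {R : ℤ × ℤ → ℤ × ℤ → Prop} {c : ℤ × ℤ} {a b : ℤˣ}
    (h : EmitsRay R c (-a) (-b)) : ¬PairedBack R c a b := by
  rintro (h' | h')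
  · exact (h _ h').1 (by simp [sub_eq_add_neg])
  · exact (h _ h').2 (by simp [sub_eq_add_neg])

theorem EmitsRay.of_forall_not {R : ℤ × ℤ → ℤ × ℤ → Prop} {c : ℤ × ℤ} (h : ∀ d, ¬R c d)
    (a b : ℤˣ) : EmitsRay R c a b :=
  fun d hd => (h d hd).elim

namespace IsTatamiPairing

variable {m n : ℕ} {R : ℤ × ℤ → ℤ × ℤ → Prop}

theorem transpose (hR : IsTatamiPairing m n R) :
    IsTatamiPairing n m (fun c d => R c.swap d.swap) where
  symm h := hR.symm h
  unique h h' := Prod.swap_injective (hR.unique h h')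
  square c hc hc' := by
    have := hR.square c.swap ⟨hc.2.2.1, hc.2.2.2, hc.1, hc.2.1⟩
      ⟨hc'.2.2.1, hc'.2.2.2, hc'.1, hc'.2.1⟩
    simp only [Prod.swap_prod_mk, Prod.fst_swap, Prod.snd_swap] at this ⊢
    tauto

theorem square_dir (hR : IsTatamiPairing m n R) (c : ℤ × ℤ) (a b : ℤˣ) (hc : InGrid m n c)
    (hc' : InGrid m n (c.1 + a, c.2 + b)) :
    R c (c.1 + a, c.2) ∨ R c (c.1, c.2 + b) ∨
      R (c.1 + a, c.2 + b) (c.1 + a, c.2) ∨ R (c.1 + a, c.2 + b) (c.1, c.2 + b) := by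
  obtain ⟨x, y⟩ := c
  unfold InGrid at hc hc'
  rcases Int.units_eq_one_or a with rfl | rfl <;> rcases Int.units_eq_one_or b with rfl | rfl <;>
    simp only [Units.val_one, Units.val_neg, ← sub_eq_add_neg] at hc' ⊢
  · exact hR.square (x, y) ⟨by omega, by omega, by omega, by omega⟩ hc'
  · have := hR.square (x, y - 1) ⟨by omega, by omega, by omega, by omega⟩
      ⟨by omega, by omega, by omega, by omega⟩
    simp only [sub_add_cancel] at this
    rcases this with h | h | h | h <;> have := hR.symm h <;> tauto
  · have := hR.square (x - 1, y) ⟨by omega, by omega, by omega, by omega⟩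
      ⟨by omega, by omega, by omega, by omega⟩
    simp only [sub_add_cancel] at this
    rcases this with h | h | h | h <;> have := hR.symm h <;> tauto
  · have := hR.square (x - 1, y - 1) ⟨by omega, by omega, by omega, by omega⟩
      ⟨by omega, by omega, by omega, by omega⟩
    simp only [sub_add_cancel] at this
    rcases this with h | h | h | h <;> have := hR.symm h <;> tauto

theorem emitsRay_of_pair (hR : IsTatamiPairing m n R) {c e : ℤ × ℤ} {a b : ℤˣ} (h : R c e)
    (ha : e ≠ (c.1 + a, c.2)) (hb : e ≠ (c.1, c.2 + b)) : EmitsRay R c a b := by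
  intro d hd
  rw [hR.unique hd h]
  exact ⟨ha, hb⟩

theorem emitsRay_of_pairedBack (hR : IsTatamiPairing m n R) {c : ℤ × ℤ} {a b : ℤˣ}
    (h : PairedBack R c a b) : EmitsRay R c a b := by
  rcases h with h | h <;> refine hR.emitsRay_of_pair h ?_ ?_ <;>
    rcases Int.units_eq_one_or a with rfl | rfl <;> rcases Int.units_eq_one_or b with rfl | rfl <;>
    simp [Prod.ext_iff] <;> omega

theorem pairedBack_of_emitsRay (hR : IsTatamiPairing m n R) {c : ℤ × ℤ} {a b : ℤˣ}
    (h : EmitsRay R c a b) (hc : InGrid m n c) (hc' : InGrid m n (c.1 + a, c.2 + b)) :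
    PairedBack R (c.1 + a, c.2 + b) a b := by
  unfold PairedBack
  simp only [add_sub_cancel_right]
  rcases hR.square_dir c a b hc hc' with h' | h' | h' | h'
  · exact absurd rfl (h _ h').1
  · exact absurd rfl (h _ h').2
  · exact Or.inr h'
  · exact Or.inl h'

theorem pairedBack_of_ray (hR : IsTatamiPairing m n R) {c : ℤ × ℤ} {a b : ℤˣ}
    (h : EmitsRay R c a b) (hc : InGrid m n c) {k : ℕ} (hk : 0 < k) {d : ℤ × ℤ}
    (hd : d = (c.1 + k * a, c.2 + k * b)) (hd' : InGrid m n d) : PairedBack R d a b := by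
  induction k generalizing d with
  | zero => omega
  | succ k ih =>
    subst hd
    rcases Nat.eq_zero_or_pos k with rfl | hk
    · simpa using hR.pairedBack_of_emitsRay h hc (by simpa using hd')
    · have hprev := hR.emitsRay_of_pairedBack (ih hk rfl (hc.of_ray_succ hd'))
      convert hR.pairedBack_of_emitsRay hprev (hc.of_ray_succ hd')
        (by convert hd' using 2 <;> push_cast <;> ring) using 2 <;> push_cast <;> ring

theorem pair_of_pairedBack_of_pairedBack_neg (hR : IsTatamiPairing m n R) {c : ℤ × ℤ}
    {a b : ℤˣ} (h : PairedBack R c a b) (h' : PairedBack R c a (-b)) : R c (c.1 - a, c.2) := by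
  rcases h with h | h
  · exact h
  rcases h' with h' | h'
  · exact h'
  have := hR.unique h h'
  rcases Int.units_eq_one_or b with rfl | rfl <;> simp [Prod.ext_iff] at this <;> omega

/-- The rays of the two sources cross at `(x + t, y + t)` and `(x - δ, y + δ)`; each crossing
forces a domino whose far cell is a new source, and the new pair of sources spans the transposed
configuration with parameters `t - 1` and `δ - 1`. -/
theorem false_of_facing_sources (hR : IsTatamiPairing m n R) {x y x' y' : ℤ} {t δ : ℕ}
    (htδ : 0 < t + δ) (hx' : x' = x + t - δ) (hy' : y' = y + t + δ)
    (hp₁ : EmitsRay R (x, y) 1 1) (hp₂ : EmitsRay R (x, y) (-1) 1)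
    (hq₁ : EmitsRay R (x', y') 1 (-1)) (hq₂ : EmitsRay R (x', y') (-1) (-1))
    (hp : InGrid m n (x, y)) (hq : InGrid m n (x', y'))
    (hP : InGrid m n (x + t, y + t)) (hQ : InGrid m n (x - δ, y + δ)) : False := by
  induction t generalizing m n R x y x' y' δ with
  | zero =>
    refine EmitsRay.not_pairedBack_neg (a := -1) (b := 1) (by simpa using hq₁) ?_
    exact hR.pairedBack_of_ray hp₂ hp (k := δ) (by omega) (by ext <;> simp <;> omega) hq
  | succ t ih =>
    obtain _ | δ := δ
    · refine EmitsRay.not_pairedBack_neg (a := 1) (b := 1) hq₂ ?_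
      exact hR.pairedBack_of_ray hp₁ hp (k := t + 1) (by omega) (by ext <;> simp <;> omega) hq
    push_cast at hP hQ
    have hPP := hR.pair_of_pairedBack_of_pairedBack_neg (b := 1)
      (hR.pairedBack_of_ray hp₁ hp (k := t + 1) (by omega) (by simp) hP)
      (hR.pairedBack_of_ray hq₁ hq (k := δ + 1) (by omega) (by ext <;> simp <;> omega) hP)
    have hQQ := hR.pair_of_pairedBack_of_pairedBack_neg (b := 1)
      (hR.pairedBack_of_ray hp₂ hp (k := δ + 1) (by omega) (by ext <;> simp; omega) hQ)
      (hR.pairedBack_of_ray hq₂ hq (k := t + 1) (by omega) (by ext <;> simp <;> omega) hQ)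
    simp only [Units.val_one, Units.val_neg, sub_neg_eq_add] at hPP hQQ
    have hP' := hR.symm hPP
    have hQ' := hR.symm hQQ
    rcases Nat.eq_zero_or_pos (t + δ) with h0 | h0
    · have e : (x - (δ + 1 : ℤ) + 1, y + (δ + 1 : ℤ)) = (x + (t + 1 : ℤ) - 1, y + (t + 1 : ℤ)) := by
        ext <;> simp <;> omega
      rw [e] at hQ'
      have := hR.unique hP' hQ'
      simp only [Prod.mk.injEq] at this
      omega
    refine ih hR.transpose (x := y + (δ + 1 : ℤ)) (y := x - (δ + 1 : ℤ) + 1)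
      (x' := y + (t + 1 : ℤ)) (y' := x + (t + 1 : ℤ) - 1) (δ := δ) h0 ?_ ?_
      (hR.transpose.emitsRay_of_pair (e := (y + (δ + 1 : ℤ), x - (δ + 1 : ℤ))) hQ' ?_ ?_)
      (hR.transpose.emitsRay_of_pair (e := (y + (δ + 1 : ℤ), x - (δ + 1 : ℤ))) hQ' ?_ ?_)
      (hR.transpose.emitsRay_of_pair (e := (y + (t + 1 : ℤ), x + (t + 1 : ℤ))) hP' ?_ ?_)
      (hR.transpose.emitsRay_of_pair (e := (y + (t + 1 : ℤ), x + (t + 1 : ℤ))) hP' ?_ ?_)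
      ?_ ?_ ?_ ?_
    all_goals first
      | (intro h; simp only [Prod.mk.injEq, Units.val_one, Units.val_neg] at h; omega)
      | omega
      | (unfold InGrid at *; push_cast at *; omega)

theorem eq_of_unpaired_of_natAbs_sub_eq (hR : IsTatamiPairing n n R) {p q : ℤ × ℤ}
    (hp : InGrid n n p) (hq : InGrid n n q) (hp' : ∀ d, ¬R p d) (hq' : ∀ d, ¬R q d)
    (h : (p.1 - p.2).natAbs = (q.1 - q.2).natAbs) : p = q := by
  wlog hpq : p.1 + p.2 ≤ q.1 + q.2 generalizing p q
  · exact (this hq hp hq' hp' h.symm (by omega)).symm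
  wlog hp₂ : p.2 ≤ p.1 generalizing R p q
  · refine Prod.swap_injective (this hR.transpose (p := p.swap) (q := q.swap) ?_ ?_
      (fun d => hp' d.swap) (fun d => hq' d.swap) ?_ ?_ ?_) <;>
      simp only [InGrid, Prod.fst_swap, Prod.snd_swap] at * <;> omega
  obtain ⟨x, y⟩ := p
  obtain ⟨x', y'⟩ := q
  by_contra hne
  simp only [InGrid, Prod.mk.injEq] at hp hq hne hpq hp₂ h
  -- the corners of the rectangle are `q` and `p` when `p` and `q` share a diagonal,
  -- and the mirror images `q.swap` and `p.swap` otherwise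
  obtain ⟨t, δ, hx', hy', hP, hQ⟩ : ∃ t δ : ℕ, x' = x + t - δ ∧ y' = y + t + δ ∧
      InGrid n n (x + t, y + t) ∧ InGrid n n (x - δ, y + δ) := by
    unfold InGrid
    rcases Int.natAbs_eq_natAbs_iff.mp h with h | h
    · exact ⟨(x' - x).toNat, 0, by omega, by omega, by omega, by omega⟩
    · exact ⟨(x' - y).toNat, (x - y).toNat, by omega, by omega, by omega, by omega⟩
  exact hR.false_of_facing_sources (by omega) hx' hy' (.of_forall_not hp' _ _)
    (.of_forall_not hp' _ _) (.of_forall_not hq' _ _) (.of_forall_not hq' _ _)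
    ⟨by omega, by omega, by omega, by omega⟩ ⟨by omega, by omega, by omega, by omega⟩ hP hQ

end IsTatamiPairing

def tilePairing (T : Finset (Finset (ℕ × ℕ))) (c d : ℤ × ℤ) : Prop :=
  c ≠ d ∧ ∃ b ∈ T, ∃ x ∈ b, ∃ y ∈ b, c = ((x.1 : ℤ), (x.2 : ℤ)) ∧ d = ((y.1 : ℤ), (y.2 : ℤ))

theorem tilePairing_of_mem {T : Finset (Finset (ℕ × ℕ))} {b : Finset (ℕ × ℕ)} (hb : b ∈ T)
    {x y : ℕ × ℕ} (hx : x ∈ b) (hy : y ∈ b) (hxy : x ≠ y) :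
    tilePairing T (x.1, x.2) (y.1, y.2) :=
  ⟨by simpa [Prod.ext_iff] using hxy, b, hb, x, hx, y, hy, rfl, rfl⟩

namespace IsTatami

variable {m n : ℕ} {T : Finset (Finset (ℕ × ℕ))} {b b' : Finset (ℕ × ℕ)}

theorem eq_of_mem_of_mem (hT : IsTatami m n T) (hb : b ∈ T) (hb' : b' ∈ T) {x : ℕ × ℕ}
    (hx : x ∈ b) (hx' : x ∈ b') : b = b' := by
  by_contra h
  exact Finset.disjoint_left.mp (hT.2.1 b hb b' hb' h) hx hx'

theorem eq_of_ne_of_ne (hT : IsTatami m n T) (hb : b ∈ T) {x y z : ℕ × ℕ} (hx : x ∈ b)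
    (hy : y ∈ b) (hz : z ∈ b) (hyx : y ≠ x) (hzx : z ≠ x) : y = z := by
  rcases hT.1 b hb with ⟨i, j, rfl⟩ | ⟨i, j, rfl⟩ | ⟨i, j, rfl⟩ <;>
    simp only [Finset.mem_insert, Finset.mem_singleton] at hx hy hz <;> grind

theorem fst_eq_or_snd_eq (hT : IsTatami m n T) (hb : b ∈ T) {x y : ℕ × ℕ} (hx : x ∈ b)
    (hy : y ∈ b) : x.1 = y.1 ∨ x.2 = y.2 := by
  rcases hT.1 b hb with ⟨i, j, rfl⟩ | ⟨i, j, rfl⟩ | ⟨i, j, rfl⟩ <;>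
    simp only [Finset.mem_insert, Finset.mem_singleton] at hx hy <;> grind

theorem isTatamiPairing (hT : IsTatami m n T) : IsTatamiPairing m n (tilePairing T) where
  symm := fun ⟨hcd, b, hb, x, hx, y, hy, hc, hd⟩ => ⟨hcd.symm, b, hb, y, hy, x, hx, hd, hc⟩
  unique := by
    rintro c d e ⟨hcd, b, hb, x, hx, y, hy, rfl, rfl⟩ ⟨hce, b', hb', x', hx', z, hz, hc, rfl⟩
    simp only [Prod.mk.injEq, Nat.cast_inj] at hc hcd hce ⊢
    obtain rfl : x' = x := Prod.ext hc.1.symm hc.2.symm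
    obtain rfl := hT.eq_of_mem_of_mem hb hb' hx hx'
    have := hT.eq_of_ne_of_ne hb hx hy hz (fun h => hcd (by simp [h])) (fun h => hce (by simp [h]))
    simp [this]
  square := by
    rintro ⟨x, y⟩ hc hc'
    unfold InGrid at hc hc'
    lift x to ℕ using hc.1
    lift y to ℕ using hc.2.2.1
    have cover : ∀ i j : ℕ, (i : ℤ) < m → (j : ℤ) < n → ∃ b ∈ T, (i, j) ∈ b :=
      fun i j hi hj => (hT.2.2.1 (i, j)).1 ⟨by omega, by omega⟩
    obtain ⟨b₁, hb₁, h₁⟩ := cover x y (by omega) (by omega)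
    obtain ⟨b₂, hb₂, h₂⟩ := cover (x + 1) y (by push_cast; omega) (by omega)
    obtain ⟨b₃, hb₃, h₃⟩ := cover x (y + 1) (by omega) (by push_cast; omega)
    obtain ⟨b₄, hb₄, h₄⟩ := cover (x + 1) (y + 1) (by push_cast; omega) (by push_cast; omega)
    by_contra H
    simp only [not_or] at H
    refine hT.2.2.2 x y b₁ hb₁ b₂ hb₂ b₃ hb₃ b₄ hb₄ h₁ h₂ h₃ h₄ ⟨?_, ?_, ?_, ?_, ?_, ?_⟩ <;>
      rintro rfl
    · simpa using H.1 (by simpa using tilePairing_of_mem hb₁ h₁ h₂ (by simp))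
    · simpa using H.2.1 (by simpa using tilePairing_of_mem hb₁ h₁ h₃ (by simp))
    · simpa using hT.fst_eq_or_snd_eq hb₁ h₁ h₄
    · simpa using hT.fst_eq_or_snd_eq hb₂ h₂ h₃
    · simpa using H.2.2.1 (by simpa using tilePairing_of_mem hb₂ h₄ h₂ (by simp))
    · simpa using H.2.2.2 (by simpa using tilePairing_of_mem hb₃ h₄ h₃ (by simp))

theorem not_tilePairing_of_singleton_mem (hT : IsTatami m n T) {x : ℕ × ℕ} (h : {x} ∈ T)
    (d : ℤ × ℤ) : ¬tilePairing T (x.1, x.2) d := by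
  rintro ⟨hcd, b, hb, x', hx', y, hy, hc, rfl⟩
  simp only [Prod.mk.injEq, Nat.cast_inj] at hc
  obtain rfl : x' = x := Prod.ext hc.1.symm hc.2.symm
  obtain rfl := hT.eq_of_mem_of_mem hb h hx' (Finset.mem_singleton_self _)
  rw [Finset.mem_singleton.mp hy] at hcd
  exact hcd rfl

theorem exists_eq_singleton_of_isMonomino (hT : IsTatami m n T) (hb : b ∈ T)
    (hmono : IsMonomino b) : ∃ x : ℕ × ℕ, b = {x} ∧ x.1 < m ∧ x.2 < n := by
  obtain ⟨i, j, rfl⟩ := hmono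
  exact ⟨(i, j), rfl, (hT.2.2.1 (i, j)).2 ⟨_, hb, Finset.mem_singleton_self _⟩⟩

end IsTatami

theorem tatami_monomino_upper_bound_general (n : ℕ)
    (T : Finset (Finset (ℕ × ℕ))) (hT : IsTatami n n T) :
    monoCount T ≤ n := by
  classical
  calc monoCount T ≤ (Finset.range n).card := by
        refine Finset.card_le_card_of_injOn (fun b => ∑ x ∈ b, ((x.1 : ℤ) - x.2).natAbs) ?_ ?_
        · intro b hb
          obtain ⟨hbT, hmono⟩ := Finset.mem_filter.mp hb
          obtain ⟨x, rfl, hx⟩ := hT.exists_eq_singleton_of_isMonomino hbT hmono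
          simp only [Finset.sum_singleton, Finset.coe_range, Set.mem_Iio]
          omega
        · intro b hb b' hb' h
          obtain ⟨hbT, hmono⟩ := Finset.mem_filter.mp hb
          obtain ⟨hbT', hmono'⟩ := Finset.mem_filter.mp hb'
          obtain ⟨x, rfl, hx⟩ := hT.exists_eq_singleton_of_isMonomino hbT hmono
          obtain ⟨x', rfl, hx'⟩ := hT.exists_eq_singleton_of_isMonomino hbT' hmono'
          have := hT.isTatamiPairing.eq_of_unpaired_of_natAbs_sub_eq (p := (x.1, x.2))
            (q := (x'.1, x'.2)) (by unfold InGrid; omega) (by unfold InGrid; omega)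
            (hT.not_tilePairing_of_singleton_mem hbT) (hT.not_tilePairing_of_singleton_mem hbT')
            (by simpa using h)
          simp only [Prod.mk.injEq, Nat.cast_inj] at this
          rw [Prod.ext this.1 this.2]
    _ = n := Finset.card_range n

theorem tatami_monomino_upper_bound (n : ℕ) (hn : 0 < n)
    (T : Finset (Finset (ℕ × ℕ))) (hT : IsTatami n n T) :
    monoCount T ≤ n :=
  tatami_monomino_upper_bound_general n T hT
end

section
/- For every positive integer n, there exists a tatami covering of the n×n grid that contains exactly n monominoes. -/
/-!
Lay vertical dominoes in a brick pattern: in column `j` they cover the rows `i, i + 1` with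
`i ≡ j (mod 2)`, and the cells left over at the two ends of a column are monominoes. Since the
pattern is staggered between neighbouring columns, every `2 × 2` square has one column covered by
a single domino, so no four tiles meet. On the `n × n` grid the monominoes are the cells `(0, j)`
with `j` odd and the cells `(n - 1, j)` with `n - 1 + j` even, that is `⌊n/2⌋ + ⌈n/2⌉ = n` cells.
-/

open Finset

def brickBlock (m : ℕ) (p : ℕ × ℕ) : Finset (ℕ × ℕ) :=
  if (p.1 + p.2) % 2 = 0 then
    if p.1 + 1 < m then {p, (p.1 + 1, p.2)} else {p}
  else
    if p.1 = 0 then {p} else {(p.1 - 1, p.2), p}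

lemma mem_brickBlock_self (m : ℕ) (p : ℕ × ℕ) : p ∈ brickBlock m p := by
  unfold brickBlock; split_ifs <;> simp

lemma isMonomino_or_isVDomino_brickBlock (m : ℕ) (p : ℕ × ℕ) :
    IsMonomino (brickBlock m p) ∨ IsVDomino (brickBlock m p) := by
  obtain ⟨i, j⟩ := p
  unfold brickBlock
  split_ifs with _ _ hi
  · exact .inr ⟨i, j, rfl⟩
  · exact .inl ⟨i, j, rfl⟩
  · exact .inl ⟨i, j, rfl⟩
  · exact .inr ⟨i - 1, j, by rw [Nat.sub_add_cancel (Nat.pos_of_ne_zero hi)]⟩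

lemma brickBlock_succ_fst {m i j : ℕ} (hij : (i + j) % 2 = 0) (hi : i + 1 < m) :
    brickBlock m (i + 1, j) = brickBlock m (i, j) := by
  have hodd : (i + 1 + j) % 2 ≠ 0 := by omega
  simp [brickBlock, hij, hi, hodd]

lemma brickBlock_eq_of_mem {m : ℕ} {p q : ℕ × ℕ} (hp : p.1 < m) (hq : q ∈ brickBlock m p) :
    q.1 < m ∧ q.2 = p.2 ∧ brickBlock m q = brickBlock m p := by
  obtain ⟨i, j⟩ := p
  unfold brickBlock at hq
  split_ifs at hq with hij hi hi0 <;> simp only [mem_insert, mem_singleton] at hq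
  · rcases hq with rfl | rfl
    exacts [⟨hp, rfl, rfl⟩, ⟨hi, rfl, brickBlock_succ_fst hij hi⟩]
  · obtain rfl := hq; exact ⟨hp, rfl, rfl⟩
  · obtain rfl := hq; exact ⟨hp, rfl, rfl⟩
  · obtain ⟨k, rfl⟩ := Nat.exists_eq_succ_of_ne_zero hi0
    rcases hq with rfl | rfl
    exacts [⟨by omega, rfl, (brickBlock_succ_fst (by omega) hp).symm⟩, ⟨hp, rfl, rfl⟩]

lemma brickBlock_eq_singleton_iff {m : ℕ} {p : ℕ × ℕ} :
    brickBlock m p = {p} ↔ (p.1 + p.2) % 2 = 0 ∧ m ≤ p.1 + 1 ∨ (p.1 + p.2) % 2 = 1 ∧ p.1 = 0 := by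
  unfold brickBlock
  obtain ⟨i, j⟩ := p
  split_ifs
  · rw [pair_comm, insert_eq_self]; simp only [mem_singleton, Prod.mk.injEq]; omega
  · simp only [true_iff]; omega
  · simp only [true_iff]; omega
  · rw [insert_eq_self]; simp only [mem_singleton, Prod.mk.injEq]; omega

def brickTiling (m n : ℕ) : Finset (Finset (ℕ × ℕ)) :=
  (range m ×ˢ range n).image (brickBlock m)

lemma eq_brickBlock_of_mem_brickTiling {m n : ℕ} {b : Finset (ℕ × ℕ)} {q : ℕ × ℕ}
    (hb : b ∈ brickTiling m n) (hq : q ∈ b) : q.1 < m ∧ q.2 < n ∧ brickBlock m q = b := by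
  simp only [brickTiling, mem_image, mem_product, mem_range] at hb
  obtain ⟨p, ⟨hpm, hpn⟩, rfl⟩ := hb
  obtain ⟨hqm, hqp, hqb⟩ := brickBlock_eq_of_mem hpm hq
  exact ⟨hqm, hqp ▸ hpn, hqb⟩

lemma brickBlock_mem_brickTiling {m n : ℕ} {p : ℕ × ℕ} (hpm : p.1 < m) (hpn : p.2 < n) :
    brickBlock m p ∈ brickTiling m n :=
  mem_image_of_mem _ (mem_product.2 ⟨mem_range.2 hpm, mem_range.2 hpn⟩)

/-- In every `2 × 2` square, one of the two columns is spanned by a single domino. -/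
theorem brickTiling_isTatami (m n : ℕ) : IsTatami m n (brickTiling m n) := by
  refine ⟨?shape, ?disjoint, ?cover, ?noFourMeet⟩
  case shape =>
    intro b hb
    obtain ⟨p, -, -, rfl⟩ := mem_image.1 hb
    exact (isMonomino_or_isVDomino_brickBlock m p).imp_right .inr
  case disjoint =>
    intro b hb c hc hbc
    refine disjoint_left.2 fun q hqb hqc => hbc ?_
    rw [← (eq_brickBlock_of_mem_brickTiling hb hqb).2.2, (eq_brickBlock_of_mem_brickTiling hc hqc).2.2]
  case cover =>
    intro p
    refine ⟨fun ⟨hpm, hpn⟩ => ⟨_, brickBlock_mem_brickTiling hpm hpn, mem_brickBlock_self m p⟩, ?_⟩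
    rintro ⟨b, hb, hp⟩
    exact (eq_brickBlock_of_mem_brickTiling hb hp).imp_right And.left
  case noFourMeet =>
    rintro i j b₁ hb₁ b₂ hb₂ b₃ hb₃ b₄ hb₄ h₁ h₂ h₃ h₄ ⟨h₁₂, -, -, -, -, h₃₄⟩
    obtain ⟨-, hj, rfl⟩ := eq_brickBlock_of_mem_brickTiling hb₁ h₁
    obtain ⟨hi, -, rfl⟩ := eq_brickBlock_of_mem_brickTiling hb₂ h₂
    obtain ⟨-, -, rfl⟩ := eq_brickBlock_of_mem_brickTiling hb₃ h₃
    obtain ⟨-, -, rfl⟩ := eq_brickBlock_of_mem_brickTiling hb₄ h₄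
    rcases Nat.mod_two_eq_zero_or_one (i + j) with hij | hij
    · exact h₁₂ (brickBlock_succ_fst hij hi).symm
    · exact h₃₄ (brickBlock_succ_fst (by omega) hi).symm

/-- Reflecting the bottom row in the vertical midline interleaves its monominoes with those of
the top row. -/
def squareMonominoCell (n k : ℕ) : ℕ × ℕ :=
  if k % 2 = 1 then (0, k) else (n - 1, n - 1 - k)

lemma squareMonominoCell_injOn (n : ℕ) : Set.InjOn (squareMonominoCell n) (range n) := by
  intro k hk l hl h
  simp only [coe_range, Set.mem_Iio] at hk hl
  unfold squareMonominoCell at h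
  split_ifs at h <;> simp only [Prod.ext_iff] at h <;> omega

lemma filter_isMonomino_brickTiling (n : ℕ) [DecidablePred IsMonomino] :
    (brickTiling n n).filter IsMonomino =
      (range n).image (fun k => {squareMonominoCell n k}) := by
  ext b
  simp only [mem_filter, mem_image, mem_range]
  constructor
  · rintro ⟨hb, i, j, rfl⟩
    obtain ⟨hi, hj, hblock⟩ := eq_brickBlock_of_mem_brickTiling hb (mem_singleton_self (i, j))
    rcases brickBlock_eq_singleton_iff.1 hblock with ⟨hij, hlast⟩ | ⟨hij, rfl⟩
    · refine ⟨n - 1 - j, by omega, ?_⟩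
      rw [squareMonominoCell, if_neg (by omega), show n - 1 - (n - 1 - j) = j by omega,
        show n - 1 = i by omega]
    · exact ⟨j, hj, by simp [squareMonominoCell, show j % 2 = 1 by omega]⟩
  · rintro ⟨k, hk, rfl⟩
    set c := squareMonominoCell n k
    have hc : c.1 < n ∧ c.2 < n ∧ brickBlock n c = {c} := by
      simp only [c, squareMonominoCell]
      split_ifs <;> simp only [brickBlock_eq_singleton_iff, and_true] <;> omega
    exact ⟨hc.2.2 ▸ brickBlock_mem_brickTiling hc.1 hc.2.1, c.1, c.2, rfl⟩

theorem monoCount_brickTiling (n : ℕ) : monoCount (brickTiling n n) = n := by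
  classical
  rw [monoCount, filter_isMonomino_brickTiling, card_image_of_injOn, card_range]
  exact singleton_injective.comp_injOn (squareMonominoCell_injOn n)

theorem tatami_monomino_max_attained_general (n : ℕ) :
    ∃ T : Finset (Finset (ℕ × ℕ)), IsTatami n n T ∧ monoCount T = n :=
  ⟨brickTiling n n, brickTiling_isTatami n n, monoCount_brickTiling n⟩

theorem tatami_monomino_max_attained (n : ℕ) (hn : 0 < n) :
    ∃ T : Finset (Finset (ℕ × ℕ)), IsTatami n n T ∧ monoCount T = n :=
  tatami_monomino_max_attained_general n
end

section
/- There is no tatami covering of the 10×13 grid all of whose blocks are dominoes (that is, the 10×13 grid admits no monomino-free tatami covering). -/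
/-!
Record a domino covering by the direction `f p` in which the other cell of the domino of `p`
lies. Being a partition into dominoes and having no four tiles meet become local constraints
on `f`, each relating the direction of a cell to those of its upper neighbour, its left
neighbour and the left neighbour of the cell below it. In column-major order these three cells
are among the `m` cells scanned last, so the constraints can be checked by a depth-first search
over the cells that remembers only the last `m` directions. Every domino tatami covering of the
`m × n` grid yields a successful branch of that search, and for the `10 × 13` grid the kernel
evaluates the search to `false`.
-/

inductive Dir
  | left | right | up | down
  deriving DecidableEq

namespace Dir

def opp : Dir → Dir
  | left => right
  | right => left
  | up => down
  | down => up

/-- By truncated subtraction, `left` from column `0` and `up` from row `0` stay put. -/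
def move : Dir → ℕ × ℕ → ℕ × ℕ
  | left, (i, j) => (i, j - 1)
  | right, (i, j) => (i, j + 1)
  | up, (i, j) => (i - 1, j)
  | down, (i, j) => (i + 1, j)

lemma opp_move_move {d : Dir} {p : ℕ × ℕ} (h : d.move p ≠ p) :
    d.opp.move (d.move p) = p := by
  obtain ⟨i, j⟩ := p
  cases d <;> simp only [move, opp, ne_eq, Prod.mk.injEq, true_and, and_true] at h ⊢ <;> omega

lemma eq_of_move_eq {d d' : Dir} {p : ℕ × ℕ} (h : d.move p = d'.move p) (hp : d.move p ≠ p) :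
    d = d' := by
  obtain ⟨i, j⟩ := p
  cases d <;> cases d' <;>
    simp only [move, ne_eq, Prod.mk.injEq, true_and, and_true, reduceCtorEq] at h hp ⊢ <;> omega

end Dir

section Dominoes

variable {b : Finset (ℕ × ℕ)} {p q r : ℕ × ℕ}

lemma exists_move_mem_of_domino (hb : IsHDomino b ∨ IsVDomino b) (hp : p ∈ b) :
    ∃ d : Dir, d.move p ≠ p ∧ d.move p ∈ b := by
  rcases hb with ⟨i, j, rfl⟩ | ⟨i, j, rfl⟩ <;>
    rcases Finset.mem_insert.1 hp with rfl | hp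
  · exact ⟨.right, by simp [Dir.move]⟩
  · obtain rfl := Finset.mem_singleton.1 hp
    exact ⟨.left, by simp [Dir.move]⟩
  · exact ⟨.down, by simp [Dir.move]⟩
  · obtain rfl := Finset.mem_singleton.1 hp
    exact ⟨.up, by simp [Dir.move]⟩

lemma eq_of_mem_domino (hb : IsHDomino b ∨ IsVDomino b) (hp : p ∈ b) (hq : q ∈ b)
    (hr : r ∈ b) (hqp : q ≠ p) (hrp : r ≠ p) : q = r := by
  rcases hb with ⟨i, j, rfl⟩ | ⟨i, j, rfl⟩ <;>
    simp only [Finset.mem_insert, Finset.mem_singleton] at hp hq hr <;> grind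

end Dominoes

def SameBlock (T : Finset (Finset (ℕ × ℕ))) (p q : ℕ × ℕ) : Prop :=
  ∃ b ∈ T, p ∈ b ∧ q ∈ b

namespace SameBlock

variable {m n : ℕ} {T : Finset (Finset (ℕ × ℕ))} {p q r : ℕ × ℕ}

lemma symm (h : SameBlock T p q) : SameBlock T q p :=
  let ⟨b, hb, hp, hq⟩ := h
  ⟨b, hb, hq, hp⟩

lemma lt_and_lt (hT : IsTatami m n T) (h : SameBlock T p q) : q.1 < m ∧ q.2 < n :=
  let ⟨b, hb, _, hqb⟩ := h
  (hT.2.2.1 q).2 ⟨b, hb, hqb⟩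

lemma eq_of_ne (hT : IsTatami m n T) (hdom : ∀ b ∈ T, IsHDomino b ∨ IsVDomino b)
    (hq : SameBlock T p q) (hr : SameBlock T p r) (hqp : q ≠ p) (hrp : r ≠ p) : q = r := by
  obtain ⟨b, hb, hpb, hqb⟩ := hq
  obtain ⟨c, hc, hpc, hrc⟩ := hr
  obtain rfl : b = c := by
    by_contra hbc
    exact Finset.disjoint_left.1 (hT.2.1 b hb c hc hbc) hpb hpc
  exact eq_of_mem_domino (hdom b hb) hpb hqb hrc hqp hrp

end SameBlock

structure IsDominoTatamiField (m n : ℕ) (f : ℕ × ℕ → Dir) : Prop where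
  left_iff : ∀ i < m, ∀ j < n, f (i, j) = .left ↔ 0 < j ∧ f (i, j - 1) = .right
  up_iff : ∀ i < m, ∀ j < n, f (i, j) = .up ↔ 0 < i ∧ f (i - 1, j) = .down
  down_lt : ∀ i < m, ∀ j < n, f (i, j) = .down → i + 1 < m
  right_lt : ∀ i < m, ∀ j < n, f (i, j) = .right → j + 1 < n
  no_four : ∀ i j, i + 1 < m → j + 1 < n →
    f (i, j) = .right ∨ f (i, j) = .down ∨ f (i + 1, j) = .right ∨ f (i, j + 1) = .down

def IsPartnerField (T : Finset (Finset (ℕ × ℕ))) (m n : ℕ) (f : ℕ × ℕ → Dir) : Prop :=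
  ∀ p : ℕ × ℕ, p.1 < m → p.2 < n → SameBlock T p ((f p).move p) ∧ (f p).move p ≠ p

section PartnerField

variable {m n : ℕ} {T : Finset (Finset (ℕ × ℕ))} {f : ℕ × ℕ → Dir} {p q : ℕ × ℕ}

lemma exists_isPartnerField (hT : IsTatami m n T)
    (hdom : ∀ b ∈ T, IsHDomino b ∨ IsVDomino b) :
    ∃ f, IsPartnerField T m n f := by
  have hpartner (p : ℕ × ℕ) : ∃ d : Dir,
      p.1 < m → p.2 < n → SameBlock T p (d.move p) ∧ d.move p ≠ p := by
    by_cases hp : p.1 < m ∧ p.2 < n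
    · obtain ⟨b, hb, hpb⟩ := (hT.2.2.1 p).1 hp
      obtain ⟨d, hd, hdb⟩ := exists_move_mem_of_domino (hdom b hb) hpb
      exact ⟨d, fun _ _ => ⟨⟨b, hb, hpb, hdb⟩, hd⟩⟩
    · exact ⟨.up, fun h₁ h₂ => (hp ⟨h₁, h₂⟩).elim⟩
  choose f hf using hpartner
  exact ⟨f, hf⟩

namespace IsPartnerField

lemma eq_move_of_sameBlock (hf : IsPartnerField T m n f) (hT : IsTatami m n T)
    (hdom : ∀ b ∈ T, IsHDomino b ∨ IsVDomino b) (hp : p.1 < m ∧ p.2 < n)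
    (hpq : SameBlock T p q) (hqp : q ≠ p) : q = (f p).move p :=
  hpq.eq_of_ne hT hdom (hf p hp.1 hp.2).1 hqp (hf p hp.1 hp.2).2

lemma eq_iff (hf : IsPartnerField T m n f) (hT : IsTatami m n T)
    (hdom : ∀ b ∈ T, IsHDomino b ∨ IsVDomino b) (hp : p.1 < m ∧ p.2 < n) (d : Dir) :
    f p = d ↔ SameBlock T p (d.move p) ∧ d.move p ≠ p := by
  refine ⟨fun h => h ▸ hf p hp.1 hp.2, fun ⟨hs, hne⟩ => ?_⟩
  exact (Dir.eq_of_move_eq (hf.eq_move_of_sameBlock hT hdom hp hs hne) hne).symm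

lemma eq_iff_opp (hf : IsPartnerField T m n f) (hT : IsTatami m n T)
    (hdom : ∀ b ∈ T, IsHDomino b ∨ IsVDomino b) (hp : p.1 < m ∧ p.2 < n) {d : Dir}
    (hq : (d.move p).1 < m ∧ (d.move p).2 < n) :
    f p = d ↔ d.move p ≠ p ∧ f (d.move p) = d.opp := by
  rw [hf.eq_iff hT hdom hp, hf.eq_iff hT hdom hq]
  constructor
  · rintro ⟨hs, hne⟩
    rw [Dir.opp_move_move hne]
    exact ⟨hne, hs.symm, hne.symm⟩
  · rintro ⟨hne, hs, -⟩
    rw [Dir.opp_move_move hne] at hs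
    exact ⟨hs.symm, hne⟩

lemma no_four (hf : IsPartnerField T m n f) (hT : IsTatami m n T)
    (hdom : ∀ b ∈ T, IsHDomino b ∨ IsVDomino b) {i j : ℕ} (hi : i + 1 < m)
    (hj : j + 1 < n) :
    f (i, j) = .right ∨ f (i, j) = .down ∨ f (i + 1, j) = .right ∨ f (i, j + 1) = .down := by
  obtain ⟨b₁, hb₁, h₁⟩ := (hT.2.2.1 (i, j)).1 ⟨by omega, by omega⟩
  obtain ⟨b₂, hb₂, h₂⟩ := (hT.2.2.1 (i + 1, j)).1 ⟨hi, by omega⟩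
  obtain ⟨b₃, hb₃, h₃⟩ := (hT.2.2.1 (i, j + 1)).1 ⟨by omega, hj⟩
  obtain ⟨b₄, hb₄, h₄⟩ := (hT.2.2.1 (i + 1, j + 1)).1 ⟨hi, hj⟩
  have hpair {p : ℕ × ℕ} (d : Dir) {b : Finset (ℕ × ℕ)} (hp : p.1 < m ∧ p.2 < n)
      (hb : b ∈ T) (hpb : p ∈ b) (hdb : d.move p ∈ b) (hne : d.move p ≠ p) : f p = d :=
    (hf.eq_iff hT hdom hp d).2 ⟨⟨b, hb, hpb, hdb⟩, hne⟩
  have hdiag (d : Dir) : d.move (i, j) ≠ (i + 1, j + 1) ∧ d.move (i, j + 1) ≠ (i + 1, j) := by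
    cases d <;> simp [Dir.move]
  by_contra! h
  refine hT.2.2.2 i j b₁ hb₁ b₂ hb₂ b₃ hb₃ b₄ hb₄ h₁ h₂ h₃ h₄
    ⟨?_, ?_, ?_, ?_, ?_, ?_⟩ <;> rintro rfl
  · exact h.2.1 (hpair .down ⟨by omega, by omega⟩ hb₁ h₁ h₂ (by simp [Dir.move]))
  · exact h.1 (hpair .right ⟨by omega, by omega⟩ hb₁ h₁ h₃ (by simp [Dir.move]))
  · exact (hdiag _).1 (hf.eq_move_of_sameBlock hT hdom ⟨by omega, by omega⟩
      ⟨b₁, hb₁, h₁, h₄⟩ (by simp)).symm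
  · exact (hdiag _).2 (hf.eq_move_of_sameBlock hT hdom ⟨by omega, by omega⟩
      ⟨b₂, hb₂, h₃, h₂⟩ (by simp)).symm
  · exact h.2.2.1 (hpair .right ⟨hi, by omega⟩ hb₂ h₂ h₄ (by simp [Dir.move]))
  · exact h.2.2.2 (hpair .down ⟨by omega, hj⟩ hb₃ h₃ h₄ (by simp [Dir.move]))

theorem isDominoTatamiField (hf : IsPartnerField T m n f) (hT : IsTatami m n T)
    (hdom : ∀ b ∈ T, IsHDomino b ∨ IsVDomino b) : IsDominoTatamiField m n f where
  left_iff i hi j hj := by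
    rw [hf.eq_iff_opp hT hdom (p := (i, j)) ⟨hi, hj⟩ (d := .left)
      ⟨hi, by simp [Dir.move]; omega⟩]
    simp only [Dir.move, Dir.opp, ne_eq, Prod.mk.injEq, true_and]
    constructor <;> rintro ⟨h₁, h₂⟩ <;> exact ⟨by omega, h₂⟩
  up_iff i hi j hj := by
    rw [hf.eq_iff_opp hT hdom (p := (i, j)) ⟨hi, hj⟩ (d := .up)
      ⟨by simp [Dir.move]; omega, hj⟩]
    simp only [Dir.move, Dir.opp, ne_eq, Prod.mk.injEq, and_true]
    constructor <;> rintro ⟨h₁, h₂⟩ <;> exact ⟨by omega, h₂⟩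
  down_lt i hi j hj h := (((hf.eq_iff hT hdom ⟨hi, hj⟩ .down).1 h).1.lt_and_lt hT).1
  right_lt i hi j hj h := (((hf.eq_iff hT hdom ⟨hi, hj⟩ .right).1 h).1.lt_and_lt hT).2
  no_four _ _ hi hj := hf.no_four hT hdom hi hj

end IsPartnerField

end PartnerField

/-- `up`, `left` and `leftBelow` are the directions at `(i - 1, j)`, `(i, j - 1)` and
`(i + 1, j - 1)`, with `none` for a cell left of the grid. -/
def Admissible (m n i j : ℕ) (d : Dir) (up left leftBelow : Option Dir) : Prop :=
  (d = .left ↔ left = some .right) ∧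
  (d = .up ↔ 0 < i ∧ up = some .down) ∧
  (d = .down → i + 1 < m) ∧
  (d = .right → j + 1 < n) ∧
  (i + 1 < m → 0 < j →
    d = .down ∨ left = some .right ∨ left = some .down ∨ leftBelow = some .right)

instance (m n i j : ℕ) (d : Dir) (up left leftBelow : Option Dir) :
    Decidable (Admissible m n i j d up left leftBelow) := by
  unfold Admissible; infer_instance

/-- The directions at the `m` cells scanned before `(i, j)` in column-major order, latest first:
`(i - 1, j), …, (0, j)`, then `(m - 1, j - 1), …, (i, j - 1)`, with `none` when `j = 0`. -/
def frontierDirs (f : ℕ × ℕ → Dir) (m i j : ℕ) : List (Option Dir) :=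
  (List.range m).map fun k =>
    if k < i then some (f (i - 1 - k, j))
    else if j = 0 then none else some (f (m + i - 1 - k, j - 1))

/-- Depth-first search for the directions of the next `fuel` cells from `(i, j)` on, where
`w` plays the role of `frontierDirs f m i j`. -/
def tatamiSearch (m n : ℕ) : ℕ → ℕ → ℕ → List (Option Dir) → Bool
  | 0, _, _, _ => true
  | fuel + 1, i, j, w => [Dir.left, .right, .up, .down].any fun d =>
      decide (Admissible m n i j d (w.getD 0 none) (w.getD (m - 1) none) (w.getD (m - 2) none)) &&
        if i + 1 = m then tatamiSearch m n fuel 0 (j + 1) (some d :: w).dropLast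
        else tatamiSearch m n fuel (i + 1) j (some d :: w).dropLast

section FrontierDirs

variable {f : ℕ × ℕ → Dir} {m i j k : ℕ}

lemma frontierDirs_getD (hk : k < m) : (frontierDirs f m i j).getD k none =
    if k < i then some (f (i - 1 - k, j))
    else if j = 0 then none else some (f (m + i - 1 - k, j - 1)) := by
  simp [frontierDirs, hk]

lemma frontierDirs_succ :
    frontierDirs f m (i + 1) j = (some (f (i, j)) :: frontierDirs f m i j).dropLast := by
  apply List.ext_getElem
  · simp [frontierDirs]
  intro k hk _
  simp only [frontierDirs, List.length_map, List.length_range] at hk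
  rcases k with _ | k
  · simp [frontierDirs]
  · simp [frontierDirs, List.getElem_dropLast, Nat.sub_add_eq, Nat.sub_right_comm _ 1 k]

lemma frontierDirs_zero_succ : frontierDirs f m 0 (j + 1) = frontierDirs f m m j := by
  refine List.map_congr_left fun k hk => ?_
  simp [List.mem_range.1 hk]

lemma frontierDirs_zero_zero : frontierDirs f m 0 0 = List.replicate m none := by
  simp [frontierDirs]

end FrontierDirs

namespace IsDominoTatamiField

variable {m n i j : ℕ} {f : ℕ × ℕ → Dir}

lemma admissible (hf : IsDominoTatamiField m n f) (hi : i < m) (hj : j < n) :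
    Admissible m n i j (f (i, j)) ((frontierDirs f m i j).getD 0 none)
      ((frontierDirs f m i j).getD (m - 1) none) ((frontierDirs f m i j).getD (m - 2) none) := by
  have hup (h : 0 < i) : (frontierDirs f m i j).getD 0 none = some (f (i - 1, j)) := by
    rw [frontierDirs_getD (by omega), if_pos h, Nat.sub_zero]
  have hleft : (frontierDirs f m i j).getD (m - 1) none =
      if j = 0 then none else some (f (i, j - 1)) := by
    rw [frontierDirs_getD (by omega), if_neg (by omega), show m + i - 1 - (m - 1) = i by omega]
  have hleftBelow (h : i + 1 < m) : (frontierDirs f m i j).getD (m - 2) none =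
      if j = 0 then none else some (f (i + 1, j - 1)) := by
    rw [frontierDirs_getD (by omega), if_neg (by omega), show m + i - 1 - (m - 2) = i + 1 by omega]
  refine ⟨?_, ?_, hf.down_lt i hi j hj, hf.right_lt i hi j hj, fun hi' hj' => ?_⟩
  · rw [hf.left_iff i hi j hj, hleft]
    split_ifs with h0 <;> simp [h0, Nat.pos_iff_ne_zero]
  · rw [hf.up_iff i hi j hj]
    constructor
    · rintro ⟨h, h'⟩
      exact ⟨h, by rw [hup h, h']⟩
    · rintro ⟨h, h'⟩
      rw [hup h, Option.some_inj] at h'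
      exact ⟨h, h'⟩
  · have := hf.no_four i (j - 1) hi' (by omega)
    rw [Nat.sub_add_cancel hj'] at this
    simp only [hleft, hleftBelow hi', Nat.pos_iff_ne_zero.1 hj', if_false, Option.some_inj]
    tauto

lemma tatamiSearch_eq_true (hf : IsDominoTatamiField m n f) (fuel : ℕ) :
    ∀ i j, i < m → fuel + (j * m + i) = m * n →
      tatamiSearch m n fuel i j (frontierDirs f m i j) = true := by
  induction fuel with
  | zero => intros; rfl
  | succ fuel ih =>
    intro i j hi hfuel
    have hj : j < n := by
      by_contra! h
      have := Nat.mul_le_mul_right m h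
      rw [mul_comm n] at this
      omega
    rw [tatamiSearch, List.any_eq_true]
    refine ⟨f (i, j), by cases f (i, j) <;> simp, ?_⟩
    rw [Bool.and_eq_true, decide_eq_true_eq, ← frontierDirs_succ]
    refine ⟨hf.admissible hi hj, ?_⟩
    split_ifs with him
    · rw [him, ← frontierDirs_zero_succ]
      exact ih 0 (j + 1) (by omega) (by rw [Nat.succ_mul]; omega)
    · exact ih (i + 1) j (by omega) (by omega)

end IsDominoTatamiField

theorem tatamiSearch_eq_true_of_isTatami {m n : ℕ} {T : Finset (Finset (ℕ × ℕ))}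
    (hT : IsTatami m n T) (hdom : ∀ b ∈ T, IsHDomino b ∨ IsVDomino b) :
    tatamiSearch m n (m * n) 0 0 (List.replicate m none) = true := by
  rcases Nat.eq_zero_or_pos m with rfl | hm
  · rw [zero_mul, tatamiSearch]
  obtain ⟨f, hf⟩ := exists_isPartnerField hT hdom
  rw [← frontierDirs_zero_zero (f := f)]
  exact (hf.isDominoTatamiField hT hdom).tatamiSearch_eq_true _ 0 0 hm (by ring)

lemma tatamiSearch_10_13 :
    tatamiSearch 10 13 (10 * 13) 0 0 (List.replicate 10 none) = false := by
  decide +kernel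

theorem no_domino_tatami_10_13 :
    ¬ ∃ T : Finset (Finset (ℕ × ℕ)),
        IsTatami 10 13 T ∧ ∀ b ∈ T, IsHDomino b ∨ IsVDomino b := by
  rintro ⟨T, hT, hdom⟩
  have hsearch := tatamiSearch_eq_true_of_isTatami hT hdom
  rw [tatamiSearch_10_13] at hsearch
  exact Bool.false_ne_true hsearch
end
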